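/- arXiv:2601.12579 — 6 statements merged into one kernel-verified Lean document; each statement's English description precedes it below -/
import Mathlib

section
/- Let r ∈ ℂ, let a : ℕ → ℂ be a sequence, and let b := T_r a. Then in the ring of formal power series ℂ[[z]] one has the identity (1 − r z) · ∑_{n≥0} b_n z^n = ∑_{k≥0} a_k z^k (1 − r z)^{−k}; equivalently, the ordinary generating function of b equals (1 − r z)^{−1} · A(z/(1 − r z)) where A is the ordinary generating function of a and the substitution z ↦ z/(1 − r z) is the formal substitution of a power series with zero constant term. -/
/-!
Newton's binomial series gives `X^k (1 - rX)^{-(k+1)} = ∑_n C(n,k) r^(n-k) X^n`, so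
`B = ∑_k a_k X^k (1 - rX)^{-(k+1)}`, and multiplying by `1 - rX` gives the identity. Only the
summands with `k ≤ n` contribute to the coefficient of `X^n`, so finite partial sums suffice.
-/

open PowerSeries

namespace PowerSeries

theorem coeff_mul_congr_right {R : Type*} [Semiring R] (f : R⟦X⟧) {g h : R⟦X⟧} {n : ℕ}
    (hgh : ∀ m ≤ n, coeff m g = coeff m h) : coeff n (f * g) = coeff n (f * h) := by
  simp only [coeff_mul]
  exact Finset.sum_congr rfl fun p hp => by
    rw [hgh p.2 (Finset.HasAntidiagonal.antidiagonal.snd_le hp)]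

variable {K : Type*} [Field K]

theorem inv_one_sub_C_mul_X (r : K) : (1 - C r * X)⁻¹ = rescale r (mk 1) := by
  rw [eq_comm, eq_inv_iff_mul_eq_one (by simp), ← rescale_X, ← map_one (rescale r), ← map_sub,
    ← map_mul, mk_one_mul_one_sub_eq_one, map_one]

theorem X_pow_mul_inv_one_sub_C_mul_X_pow_succ (r : K) (k : ℕ) :
    X ^ k * (1 - C r * X)⁻¹ ^ (k + 1) = mk fun n => (n.choose k : K) * r ^ (n - k) := by
  ext n
  rw [inv_one_sub_C_mul_X, ← map_pow, mk_one_pow_eq_mk_choose_add, coeff_X_pow_mul', coeff_mk]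
  split_ifs with hkn
  · obtain ⟨d, rfl⟩ := Nat.exists_eq_add_of_le hkn
    simp [coeff_rescale, mul_comm]
  · simp [Nat.choose_eq_zero_of_lt (not_le.mp hkn)]

theorem coeff_sum_C_mul_X_pow_mul_inv_one_sub_C_mul_X_pow_succ (r : K) (a : ℕ → K) {m N : ℕ}
    (hmN : m ≤ N) :
    coeff m (∑ k ∈ Finset.range (N + 1), C (a k) * (X ^ k * (1 - C r * X)⁻¹ ^ (k + 1))) =
      ∑ k ∈ Finset.range (m + 1), (m.choose k : K) * r ^ (m - k) * a k := by
  simp only [map_sum, coeff_C_mul, X_pow_mul_inv_one_sub_C_mul_X_pow_succ, coeff_mk]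
  symm
  refine Finset.sum_subset_zero_on_sdiff (Finset.range_subset_range.mpr (by omega)) ?_ ?_
  · intro k hk
    simp_all [Nat.choose_eq_zero_of_lt]
  · intro k _
    ring

end PowerSeries

/-- Ordinary generating function identity for `b = T_r a`:
`(1 - r z) · B(z) = ∑_{k ≥ 0} a_k (z (1 - r z)⁻¹)^k` in `ℂ[[z]]`, read coefficientwise.
Since the `k`-th summand on the right has order at least `k`, the coefficient of `z^n`
of the formal infinite sum equals that of the partial sum over `k ≤ n`. -/
theorem ogf_binomial_convolution (r : ℂ) (a b : ℕ → ℂ)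
    (hb : ∀ n, b n = ∑ k ∈ Finset.range (n + 1), (n.choose k : ℂ) * r ^ (n - k) * a k)
    (n : ℕ) :
    PowerSeries.coeff (R := ℂ) n ((1 - PowerSeries.C (R := ℂ) r * PowerSeries.X) * PowerSeries.mk b) =
      PowerSeries.coeff (R := ℂ) n (∑ k ∈ Finset.range (n + 1),
        PowerSeries.C (R := ℂ) (a k) *
          (PowerSeries.X * (1 - PowerSeries.C (R := ℂ) r * PowerSeries.X)⁻¹) ^ k) := by
  have hb_trunc : ∀ m ≤ n, coeff m (mk b) = coeff m (∑ k ∈ Finset.range (n + 1),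
      C (a k) * (X ^ k * (1 - C r * X)⁻¹ ^ (k + 1))) := fun m hmn => by
    rw [coeff_mk, hb, coeff_sum_C_mul_X_pow_mul_inv_one_sub_C_mul_X_pow_succ r a hmn]
  have hinv : (1 - C r * X) * (1 - C r * X)⁻¹ = 1 := PowerSeries.mul_inv_cancel _ (by simp)
  rw [coeff_mul_congr_right _ hb_trunc, Finset.mul_sum]
  congr 1
  refine Finset.sum_congr rfl fun k _ => ?_
  rw [pow_succ, mul_pow]
  linear_combination C (a k) * X ^ k * (1 - C r * X)⁻¹ ^ k * hinv
end

section
/- Let P ∈ ℂ[X] be a nonzero polynomial and let a : ℕ → ℂ be a sequence satisfying P(S) a = 0, i.e. ∑_{j=0}^{d} c_j a_{n+j} = 0 for all n ≥ 0 where P = ∑_{j=0}^{d} c_j X^j. Then for every r ∈ ℂ, the sequence b := T_r a satisfies Q(S) b = 0 where Q(X) := P(X − r); that is, ∑_{j=0}^{d} q_j b_{n+j} = 0 for all n ≥ 0, where Q = ∑_{j=0}^{d} q_j X^j. -/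
open Polynomial

/-- The binomial-convolution operator `T_r`. -/
noncomputable def T (r : ℂ) (a : ℕ → ℂ) (n : ℕ) : ℂ :=
  ∑ k ∈ Finset.range (n + 1), (n.choose k : ℂ) * r ^ (n - k) * a k

/-- The operator `P(S)` acting on sequences: `(P(S) a)_n = ∑_j c_j a_{n+j}`. -/
noncomputable def polyOp (P : Polynomial ℂ) (a : ℕ → ℂ) (n : ℕ) : ℂ :=
  ∑ j ∈ Finset.range (P.natDegree + 1), P.coeff j * a (n + j)

noncomputable def Sop : Module.End ℂ (ℕ → ℂ) where
  toFun a n := a (n + 1)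
  map_add' _ _ := rfl
  map_smul' _ _ := rfl

noncomputable def Topr (r : ℂ) : Module.End ℂ (ℕ → ℂ) where
  toFun a := T r a
  map_add' a b := by
    funext n
    simp only [T, Pi.add_apply, ← Finset.sum_add_distrib]
    exact Finset.sum_congr rfl fun k _ => by ring
  map_smul' c a := by
    funext n
    simp only [T, Pi.smul_apply, smul_eq_mul, RingHom.id_apply, Finset.mul_sum]
    exact Finset.sum_congr rfl fun k _ => by ring

lemma Sop_pow (j : ℕ) (a : ℕ → ℂ) (n : ℕ) : (Sop ^ j) a n = a (n + j) := by
  induction j generalizing a n with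
  | zero => rfl
  | succ j ih =>
    rw [pow_succ]
    show (Sop ^ j) (Sop a) n = _
    rw [ih]
    rfl

lemma polyOp_eq (P : Polynomial ℂ) (a : ℕ → ℂ) (n : ℕ) :
    polyOp P a n = (aeval Sop P) a n := by
  rw [aeval_eq_sum_range]
  simp [polyOp, LinearMap.sum_apply, Finset.sum_apply, Sop_pow]

lemma intertwine (r : ℂ) : Sop * Topr r = Topr r * Sop + r • Topr r := by
  ext a n
  show T r a (n + 1) = T r (Sop a) n + r * T r a n
  rw [T, Finset.sum_range_succ' _ (n + 1)]
  have h1 : ∑ k ∈ Finset.range (n + 1),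
      ((n + 1).choose (k + 1) : ℂ) * r ^ (n + 1 - (k + 1)) * a (k + 1)
      = ∑ k ∈ Finset.range (n + 1),
        (((n.choose k : ℂ) + (n.choose (k + 1) : ℂ)) * r ^ (n - k) * a (k + 1)) := by
    refine Finset.sum_congr rfl fun k _ => ?_
    rw [Nat.succ_sub_succ, Nat.choose_succ_succ]
    push_cast
    ring
  rw [h1]
  have h2 : T r (Sop a) n = ∑ k ∈ Finset.range (n + 1),
      (n.choose k : ℂ) * r ^ (n - k) * a (k + 1) := rfl
  have h3 : r * T r a n = r ^ (n + 1) * a 0 + ∑ k ∈ Finset.range n,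
      (n.choose (k + 1) : ℂ) * r ^ (n - (k + 1)) * r * a (k + 1) := by
    rw [T, Finset.mul_sum, Finset.sum_range_succ' _ n, add_comm]
    congr 1
    · simp only [Nat.choose_zero_right, Nat.cast_one, one_mul, Nat.sub_zero, pow_succ]
      ring
    · exact Finset.sum_congr rfl fun k _ => by ring
  rw [h2, h3]
  have h4 : ∑ k ∈ Finset.range (n + 1),
      (((n.choose k : ℂ) + (n.choose (k + 1) : ℂ)) * r ^ (n - k) * a (k + 1))
      = (∑ k ∈ Finset.range (n + 1), (n.choose k : ℂ) * r ^ (n - k) * a (k + 1))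
      + ∑ k ∈ Finset.range (n + 1), (n.choose (k + 1) : ℂ) * r ^ (n - k) * a (k + 1) := by
    rw [← Finset.sum_add_distrib]
    exact Finset.sum_congr rfl fun k _ => by ring
  have h5 : ∑ k ∈ Finset.range (n + 1), (n.choose (k + 1) : ℂ) * r ^ (n - k) * a (k + 1)
      = ∑ k ∈ Finset.range n, (n.choose (k + 1) : ℂ) * r ^ (n - (k + 1)) * r * a (k + 1) := by
    rw [Finset.sum_range_succ]
    simp only [Nat.choose_succ_self, Nat.cast_zero, zero_mul, add_zero]
    refine Finset.sum_congr rfl fun k hk => ?_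
    have hk' : k + 1 ≤ n := Finset.mem_range.mp hk
    have : n - k = (n - (k + 1)) + 1 := by omega
    rw [this, pow_succ]
    ring
  rw [h4, h5]
  simp only [Nat.choose_zero_right, Nat.cast_one, one_mul, Nat.sub_zero]
  ring

lemma semiconj {A : Type*} [Ring A] [Algebra ℂ A] (x y t : A) (h : x * t = t * y)
    (p : Polynomial ℂ) : aeval x p * t = t * aeval y p := by
  have hpow : ∀ n : ℕ, x ^ n * t = t * y ^ n := by
    intro n
    induction n with
    | zero => simp
    | succ n ih => rw [pow_succ, pow_succ, mul_assoc, h, ← mul_assoc, ih, mul_assoc]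
  induction p using Polynomial.induction_on' with
  | add p q hp hq => simp [add_mul, mul_add, hp, hq]
  | monomial n c =>
    rw [aeval_monomial, aeval_monomial, mul_assoc, hpow, ← mul_assoc,
      Algebra.commutes, mul_assoc]

/-- Root-shift theorem: if `P(S) a = 0` then `Q(S) (T_r a) = 0` with `Q(X) = P(X - r)`. -/
theorem root_shift (P : Polynomial ℂ) (hP : P ≠ 0) (a : ℕ → ℂ)
    (ha : ∀ n, polyOp P a n = 0) (r : ℂ) :
    ∀ n, polyOp (P.comp (X - C r)) (T r a) n = 0 := by
  intro n
  have hTa : T r a = Topr r a := rfl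
  rw [polyOp_eq, hTa, aeval_comp]
  have hx : aeval Sop (X - C r) = Sop - r • (1 : Module.End ℂ (ℕ → ℂ)) := by
    simp [Algebra.algebraMap_eq_smul_one]
  have hcomm : (Sop - r • (1 : Module.End ℂ (ℕ → ℂ))) * Topr r = Topr r * Sop := by
    rw [sub_mul, intertwine, smul_mul_assoc, one_mul]
    abel
  have hsc := semiconj _ Sop (Topr r) hcomm P
  have hPa : aeval Sop P a = 0 := by
    funext m
    rw [← polyOp_eq]
    exact ha m
  rw [hx]
  have : (aeval (Sop - r • (1 : Module.End ℂ (ℕ → ℂ))) P) (Topr r a)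
      = Topr r (aeval Sop P a) := by
    have := congrArg (fun f : Module.End ℂ (ℕ → ℂ) => f a) hsc
    simpa using this
  rw [this, hPa, map_zero]
  rfl
end

section
/- Let p, q, r ∈ ℂ and let a : ℕ → ℂ satisfy the second-order recurrence a_n = p·a_{n−1} − q·a_{n−2} for all n ≥ 2. Then b := T_r a satisfies b_n = (p + 2r)·b_{n−1} − (r² + p r + q)·b_{n−2} for all n ≥ 2. -/
lemma Tshift (r : ℂ) (a : ℕ → ℂ) (n : ℕ) :
    ∑ k ∈ Finset.range (n + 2), ((n + 1).choose k : ℂ) * r ^ (n + 1 - k) * a k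
    = r * (∑ k ∈ Finset.range (n + 1), (n.choose k : ℂ) * r ^ (n - k) * a k)
      + ∑ k ∈ Finset.range (n + 1), (n.choose k : ℂ) * r ^ (n - k) * a (k + 1) := by
  conv_lhs => rw [Finset.sum_range_succ' _ (n + 1)]
  conv_rhs => rw [Finset.mul_sum, Finset.sum_range_succ' _ n]
  have key : ∀ i ∈ Finset.range (n + 1),
      ((n + 1).choose (i + 1) : ℂ) * r ^ (n + 1 - (i + 1)) * a (i + 1)
      = (n.choose (i + 1) : ℂ) * r ^ (n - i) * a (i + 1)
        + (n.choose i : ℂ) * r ^ (n - i) * a (i + 1) := by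
    intro i _
    have h : (n + 1).choose (i + 1) = n.choose i + n.choose (i + 1) :=
      Nat.choose_succ_succ n i
    rw [Nat.succ_sub_succ, h]
    push_cast; ring
  rw [Finset.sum_congr rfl key, Finset.sum_add_distrib]
  have h1 : ∑ i ∈ Finset.range (n + 1), (n.choose (i + 1) : ℂ) * r ^ (n - i) * a (i + 1)
      = ∑ i ∈ Finset.range n, r * ((n.choose (i + 1) : ℂ) * r ^ (n - (i + 1)) * a (i + 1)) := by
    rw [Finset.sum_range_succ, Nat.choose_succ_self]
    simp only [Nat.cast_zero, zero_mul, add_zero]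
    refine Finset.sum_congr rfl fun i hi => ?_
    have hi' : i < n := Finset.mem_range.mp hi
    have : n - i = (n - (i + 1)) + 1 := by omega
    rw [this, pow_succ]
    ring
  have h2 : ((n + 1).choose 0 : ℂ) * r ^ (n + 1 - 0) * a 0
      = r * ((n.choose 0 : ℂ) * r ^ (n - 0) * a 0) := by
    simp [pow_succ]; ring
  rw [h1, h2]
  ring

/-- Second-order template: if `a_n = p a_{n-1} - q a_{n-2}` for `n ≥ 2`, then `b = T_r a`
satisfies `b_n = (p + 2r) b_{n-1} - (r² + p r + q) b_{n-2}` for `n ≥ 2`. -/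
theorem second_order_template (p q r : ℂ) (a : ℕ → ℂ)
    (ha : ∀ n, 2 ≤ n → a n = p * a (n - 1) - q * a (n - 2))
    (b : ℕ → ℂ)
    (hb : ∀ n, b n = ∑ k ∈ Finset.range (n + 1), (n.choose k : ℂ) * r ^ (n - k) * a k) :
    ∀ n, 2 ≤ n → b n = (p + 2 * r) * b (n - 1) - (r ^ 2 + p * r + q) * b (n - 2) := by
  intro n hn
  obtain ⟨m, rfl⟩ : ∃ m, n = m + 2 := ⟨n - 2, by omega⟩
  set S1 : ℕ → ℂ := fun n => ∑ k ∈ Finset.range (n + 1),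
    (n.choose k : ℂ) * r ^ (n - k) * a (k + 1) with hS1
  have hb1 : ∀ n, b (n + 1) = r * b n + S1 n := by
    intro n
    rw [hb (n + 1), hb n, hS1]
    exact Tshift r a n
  have hS1s : S1 (m + 1) = r * S1 m + ∑ k ∈ Finset.range (m + 1),
      (m.choose k : ℂ) * r ^ (m - k) * a (k + 2) := by
    simpa using Tshift r (fun k => a (k + 1)) m
  have hS2 : ∑ k ∈ Finset.range (m + 1), (m.choose k : ℂ) * r ^ (m - k) * a (k + 2)
      = p * S1 m - q * b m := by
    rw [hS1, hb m, Finset.mul_sum, Finset.mul_sum, ← Finset.sum_sub_distrib]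
    refine Finset.sum_congr rfl fun k _ => ?_
    have h := ha (k + 2) (by omega)
    have e1 : k + 2 - 1 = k + 1 := by omega
    have e2 : k + 2 - 2 = k := by omega
    rw [e1, e2] at h
    rw [h]; ring
  have e1 := hb1 (m + 1)
  have e2 := hb1 m
  rw [hS1s, hS2] at e1
  have hS1m : S1 m = b (m + 1) - r * b m := by rw [e2]; ring
  show b (m + 2) = (p + 2 * r) * b (m + 1) - (r ^ 2 + p * r + q) * b m
  rw [show m + 2 = (m + 1) + 1 from rfl, e1, hS1m]
  ring
end

section
/- Let F : ℕ → ℂ be the Fibonacci sequence (F_0 = 0, F_1 = 1, F_{n} = F_{n−1} + F_{n−2} for n ≥ 2) and let r ∈ ℂ. Then the sequence b := T_r F satisfies b_0 = 0, b_1 = 1, and b_n = (2r + 1)·b_{n−1} − (r² + r − 1)·b_{n−2} for all n ≥ 2. -/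
lemma binom_conv_key (r : ℂ) (a : ℕ → ℂ) (n : ℕ) :
    ∑ k ∈ Finset.range (n + 2), (((n+1).choose k : ℕ) : ℂ) * r ^ (n + 1 - k) * a k
    = r * ∑ k ∈ Finset.range (n + 1), ((n.choose k : ℕ) : ℂ) * r ^ (n - k) * a k
      + ∑ k ∈ Finset.range (n + 1), ((n.choose k : ℕ) : ℂ) * r ^ (n - k) * a (k+1) := by
  have h1 : ∀ k ∈ Finset.range (n+1),
      (((n+1).choose (k+1) : ℕ) : ℂ) * r ^ (n + 1 - (k+1)) * a (k+1)
      = ((n.choose k : ℕ) : ℂ) * r ^ (n - k) * a (k+1)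
        + ((n.choose (k+1) : ℕ) : ℂ) * r ^ (n - k) * a (k+1) := by
    intro k hk
    rw [Nat.choose_succ_succ', Nat.succ_sub_succ]
    push_cast
    ring
  have hrs : r * ∑ k ∈ Finset.range (n + 1), ((n.choose k : ℕ) : ℂ) * r ^ (n - k) * a k
      = (∑ k ∈ Finset.range (n+1), ((n.choose (k+1) : ℕ) : ℂ) * r ^ (n - k) * a (k+1))
        + r ^ (n+1) * a 0 := by
    rw [Finset.sum_range_succ' _ n, mul_add, Finset.mul_sum, Finset.sum_range_succ _ n]
    have h2 : ∀ k ∈ Finset.range n,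
        r * (((n.choose (k+1) : ℕ) : ℂ) * r ^ (n - (k+1)) * a (k+1))
        = ((n.choose (k+1) : ℕ) : ℂ) * r ^ (n - k) * a (k+1) := by
      intro k hk
      rw [Finset.mem_range] at hk
      have : n - k = (n - (k+1)) + 1 := by omega
      rw [this, pow_succ]
      ring
    rw [Finset.sum_congr rfl h2]
    simp only [Nat.choose_succ_self, Nat.cast_zero, zero_mul, add_zero, Nat.choose_zero_right,
      Nat.cast_one, one_mul, Nat.sub_zero, pow_succ]
    ring
  rw [hrs, Finset.sum_range_succ' _ (n+1), Finset.sum_congr rfl h1, Finset.sum_add_distrib]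
  simp only [Nat.choose_zero_right, Nat.cast_one, one_mul, Nat.sub_zero]
  ring

/-- Transformed Fibonacci: `b = T_r F` satisfies `b_0 = 0`, `b_1 = 1`, and
`b_n = (2r+1) b_{n-1} - (r²+r-1) b_{n-2}` for `n ≥ 2`. -/
theorem fibonacci_transform (F : ℕ → ℂ) (hF0 : F 0 = 0) (hF1 : F 1 = 1)
    (hF : ∀ n, F (n + 2) = F (n + 1) + F n) (r : ℂ) (b : ℕ → ℂ)
    (hb : ∀ n, b n = ∑ k ∈ Finset.range (n + 1), (n.choose k : ℂ) * r ^ (n - k) * F k) :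
    b 0 = 0 ∧ b 1 = 1 ∧
      ∀ n, 2 ≤ n →
        b n = (2 * r + 1) * b (n - 1) - (r ^ 2 + r - 1) * b (n - 2) := by
  set c : ℕ → ℂ := fun n => ∑ k ∈ Finset.range (n + 1), (n.choose k : ℂ) * r ^ (n - k) * F (k+1)
    with hc
  have key1 : ∀ n, b (n+1) = r * b n + c n := by
    intro n
    rw [hb, hb, hc]
    exact binom_conv_key r F n
  have key2 : ∀ n, c (n+1) = (r + 1) * c n + b n := by
    intro n
    have h := binom_conv_key r (fun k => F (k+1)) n
    simp only [hc, hb]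
    rw [h]
    have h3 : ∀ k ∈ Finset.range (n+1),
        ((n.choose k : ℕ) : ℂ) * r ^ (n - k) * F (k+1+1)
        = ((n.choose k : ℕ) : ℂ) * r ^ (n - k) * F (k+1)
          + ((n.choose k : ℕ) : ℂ) * r ^ (n - k) * F k := by
      intro k _
      rw [hF k]; ring
    rw [Finset.sum_congr rfl h3, Finset.sum_add_distrib]
    ring
  refine ⟨?_, ?_, ?_⟩
  · rw [hb]; simp [hF0]
  · rw [hb]
    rw [Finset.sum_range_succ, Finset.sum_range_succ]
    simp [hF0, hF1]
  · intro n hn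
    obtain ⟨m, rfl⟩ : ∃ m, n = m + 2 := ⟨n - 2, by omega⟩
    have e1 : m + 2 - 1 = m + 1 := by omega
    have e2 : m + 2 - 2 = m := by omega
    rw [e1, e2]
    have hcm : c m = b (m+1) - r * b m := by rw [key1 m]; ring
    have hb2 : b (m + 2) = r * b (m+1) + c (m+1) := key1 (m+1)
    rw [hb2, key2 m, hcm]
    ring
end

section
/- Let P : ℕ → ℂ be the Pell sequence (P_0 = 0, P_1 = 1, P_n = 2P_{n−1} + P_{n−2} for n ≥ 2) and let r ∈ ℂ. Then the sequence b := T_r P satisfies b_0 = 0, b_1 = 1, and b_n = (2r + 2)·b_{n−1} − (r² + 2r − 1)·b_{n−2} for all n ≥ 2. -/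
/-!
Pascal's rule shows that the binomial transform `b = T_r a` satisfies
`b (n + 1) = r * b n + (T_r (a ∘ succ)) n`, i.e. `T_r` intertwines the shift `E` with `E - r`.
Hence if `a` is annihilated by `E² - p E - q`, then `b` is annihilated by
`(E + r)² - p (E + r) - q`; for the Pell recurrence `p = 2`, `q = 1`.
-/

open Finset

section BinomialTransform

variable {R : Type*} [CommSemiring R]

def binomialTransform (r : R) (a : ℕ → R) (n : ℕ) : R :=
  ∑ k ∈ range (n + 1), (n.choose k : R) * r ^ (n - k) * a k

@[simp]
theorem binomialTransform_zero (r : R) (a : ℕ → R) : binomialTransform r a 0 = a 0 := by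
  simp [binomialTransform]

theorem binomialTransform_one (r : R) (a : ℕ → R) :
    binomialTransform r a 1 = r * a 0 + a 1 := by
  simp [binomialTransform, sum_range_succ]

theorem binomialTransform_succ (r : R) (a : ℕ → R) (n : ℕ) :
    binomialTransform r a (n + 1) =
      r * binomialTransform r a n + binomialTransform r (fun k => a (k + 1)) n := by
  have pascal := sum_choose_succ_mul (fun i j => r ^ j * a i) n
  simp only [← mul_assoc] at pascal
  rw [binomialTransform, pascal, binomialTransform, binomialTransform, mul_sum]
  congr 1
  refine sum_congr rfl fun k hk => ?_
  rw [Nat.sub_add_comm (Nat.lt_succ_iff.mp (mem_range.mp hk)), pow_succ]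
  ring

theorem binomialTransform_mul_add_mul (r p q : R) (a c : ℕ → R) (n : ℕ) :
    binomialTransform r (fun k => p * a k + q * c k) n =
      p * binomialTransform r a n + q * binomialTransform r c n := by
  simp only [binomialTransform, mul_sum, ← sum_add_distrib]
  exact sum_congr rfl fun _ _ => by ring

end BinomialTransform

theorem binomialTransform_add_two_of_recurrence {R : Type*} [CommRing R] {a : ℕ → R} {p q : R}
    (ha : ∀ n, a (n + 2) = p * a (n + 1) + q * a n) (r : R) (n : ℕ) :
    binomialTransform r a (n + 2) =
      (p + 2 * r) * binomialTransform r a (n + 1) +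
        (q - p * r - r ^ 2) * binomialTransform r a n := by
  have shift_two : binomialTransform r (fun k => a (k + 2)) n =
      p * binomialTransform r (fun k => a (k + 1)) n + q * binomialTransform r a n := by
    simp only [ha, binomialTransform_mul_add_mul]
  have shift_succ : binomialTransform r (fun k => a (k + 1)) (n + 1) =
      r * binomialTransform r (fun k => a (k + 1)) n + binomialTransform r (fun k => a (k + 2)) n :=
    binomialTransform_succ r _ n
  linear_combination binomialTransform_succ r a (n + 1) + shift_succ + shift_two -
    (p + r) * binomialTransform_succ r a n

/-- Transformed Pell: `b = T_r P` satisfies `b_0 = 0`, `b_1 = 1`, and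
`b_n = (2r+2) b_{n-1} - (r²+2r-1) b_{n-2}` for `n ≥ 2`. -/
theorem pell_transform (P : ℕ → ℂ) (hP0 : P 0 = 0) (hP1 : P 1 = 1)
    (hP : ∀ n, P (n + 2) = 2 * P (n + 1) + P n) (r : ℂ) (b : ℕ → ℂ)
    (hb : ∀ n, b n = ∑ k ∈ Finset.range (n + 1), (n.choose k : ℂ) * r ^ (n - k) * P k) :
    b 0 = 0 ∧ b 1 = 1 ∧
      ∀ n, 2 ≤ n →
        b n = (2 * r + 2) * b (n - 1) - (r ^ 2 + 2 * r - 1) * b (n - 2) := by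
  obtain rfl : b = binomialTransform r P := funext hb
  refine ⟨by simp [hP0], by simp [binomialTransform_one, hP0, hP1], fun n hn => ?_⟩
  obtain ⟨m, rfl⟩ : ∃ m, n = m + 2 := ⟨n - 2, by omega⟩
  have hPell : ∀ n, P (n + 2) = 2 * P (n + 1) + 1 * P n := by simpa using hP
  rw [show m + 2 - 1 = m + 1 from rfl, show m + 2 - 2 = m from rfl,
    binomialTransform_add_two_of_recurrence hPell]
  ring
end

section
/- Let L : ℕ → ℂ be the Lucas sequence (L_0 = 2, L_1 = 1, L_{n+2} = L_{n+1} + L_n) and let r ∈ ℂ. Then the sequence b := T_r L satisfies b_0 = 2, b_1 = 2r + 1, and b_n = (2r + 1)·b_{n−1} − (r² + r − 1)·b_{n−2} for all n ≥ 2. -/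
/-- Transformed Lucas: `b = T_r L` satisfies `b_0 = 2`, `b_1 = 2r + 1`, and
`b_n = (2r+1) b_{n-1} - (r²+r-1) b_{n-2}` for `n ≥ 2`. -/
theorem lucas_transform (L : ℕ → ℂ) (hL0 : L 0 = 2) (hL1 : L 1 = 1)
    (hL : ∀ n, L (n + 2) = L (n + 1) + L n) (r : ℂ) (b : ℕ → ℂ)
    (hb : ∀ n, b n = ∑ k ∈ Finset.range (n + 1), (n.choose k : ℂ) * r ^ (n - k) * L k) :
    b 0 = 2 ∧ b 1 = 2 * r + 1 ∧
      ∀ n, 2 ≤ n →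
        b n = (2 * r + 1) * b (n - 1) - (r ^ 2 + r - 1) * b (n - 2) := by
  set s : ℂ := (Real.sqrt 5 : ℂ) with hs
  have h5 : s ^ 2 = 5 := by
    rw [hs]
    norm_cast
    rw [Real.sq_sqrt] <;> norm_num
  have hx2 : ((1 + s) / 2) ^ 2 = (1 + s) / 2 + 1 := by linear_combination h5 / 4
  have hy2 : ((1 - s) / 2) ^ 2 = (1 - s) / 2 + 1 := by linear_combination h5 / 4
  have hLn : ∀ n, L n = ((1 + s) / 2) ^ n + ((1 - s) / 2) ^ n := by
    intro n
    induction n using Nat.strong_induction_on with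
    | _ n ih =>
      match n with
      | 0 => rw [hL0]; norm_num
      | 1 => rw [hL1]; ring
      | (n + 2) =>
        rw [hL, ih (n + 1) (by omega), ih n (by omega)]
        linear_combination (-((1 + s) / 2) ^ n) * hx2 + (-((1 - s) / 2) ^ n) * hy2
  have hbn : ∀ n, b n = (((1 + s) / 2) + r) ^ n + (((1 - s) / 2) + r) ^ n := by
    intro n
    rw [hb]
    have hc : ∀ k ∈ Finset.range (n + 1), (n.choose k : ℂ) * r ^ (n - k) * L k
        = ((1 + s) / 2) ^ k * r ^ (n - k) * n.choose k
          + ((1 - s) / 2) ^ k * r ^ (n - k) * n.choose k := by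
      intro k _; rw [hLn]; ring
    rw [Finset.sum_congr rfl hc, Finset.sum_add_distrib, ← add_pow, ← add_pow]
  refine ⟨by rw [hbn]; norm_num, by rw [hbn]; ring, ?_⟩
  intro n hn
  obtain ⟨m, rfl⟩ : ∃ m, n = m + 2 := ⟨n - 2, by omega⟩
  have e1 : m + 2 - 1 = m + 1 := rfl
  have e2 : m + 2 - 2 = m := rfl
  rw [e1, e2, hbn, hbn, hbn]
  have hx2' : (((1 + s) / 2) + r) ^ 2
      = (2 * r + 1) * (((1 + s) / 2) + r) - (r ^ 2 + r - 1) := by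
    linear_combination h5 / 4
  have hy2' : (((1 - s) / 2) + r) ^ 2
      = (2 * r + 1) * (((1 - s) / 2) + r) - (r ^ 2 + r - 1) := by
    linear_combination h5 / 4
  linear_combination (((1 + s) / 2) + r) ^ m * hx2' + (((1 - s) / 2) + r) ^ m * hy2'
end
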